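/- arXiv:1901.06653 — 5 statements merged into one kernel-verified Lean document; each statement's English description precedes it below -/
import Mathlib

section
/- Suppose a polymer model (C(G), w) satisfies the polymer mixing condition with constant θ ∈ (0,1). Then for every vertex v of G, the total weight of polymers containing v satisfies a(v) = Σ_{γ ∈ C(G), v ∈ γ} w_γ ≤ θ < 1. -/
open Finset

attribute [local instance] Classical.propDecidable

/-- A polymer in a subset polymer model: a nonempty connected set of vertices together with
an assignment of non-ground-state spins to its vertices. -/
structure Polymer {V : Type} (G : SimpleGraph V) (q : ℕ) (g : V → Fin q) where
  verts : Finset V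
  nonempty : verts.Nonempty
  connected : (G.induce (↑verts : Set V)).Connected
  spin : V → Fin q
  spin_ne : ∀ v ∈ verts, spin v ≠ g v
  spin_ground : ∀ v ∉ verts, spin v = g v

namespace Polymer

variable {V : Type} {G : SimpleGraph V} {q : ℕ} {g : V → Fin q}

/-- The size of a polymer: its number of vertices. -/
def size (γ : Polymer G q g) : ℕ := γ.verts.card

/-- Two polymers are incompatible if their vertex sets are at graph distance at most 1,
i.e. they share a vertex or contain adjacent vertices. -/
def Incompat (γ γ' : Polymer G q g) : Prop :=
  ∃ u ∈ γ.verts, ∃ u' ∈ γ'.verts, u = u' ∨ G.Adj u u'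

end Polymer

/-- `a(v)`: the total weight of allowed polymers containing the vertex `v`. -/
noncomputable def aWeight {V : Type} {G : SimpleGraph V} {q : ℕ} {g : V → Fin q}
    (C : Finset (Polymer G q g)) (w : Polymer G q g → ℝ) (v : V) : ℝ :=
  ∑ γ ∈ C.filter (fun γ => v ∈ γ.verts), w γ

/-- The polymer mixing condition with constant `θ`:
`∑_{γ' ≁ γ} |γ'| w_{γ'} ≤ θ |γ|` for all allowed polymers `γ`. -/
def MixingCond {V : Type} {G : SimpleGraph V} {q : ℕ} {g : V → Fin q}
    (C : Finset (Polymer G q g)) (w : Polymer G q g → ℝ) (θ : ℝ) : Prop :=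
  ∀ γ ∈ C, ∑ γ' ∈ C.filter (fun γ' => γ'.Incompat γ), (γ'.size : ℝ) * w γ' ≤ θ * γ.size

/-- under the polymer mixing condition with constant `θ ∈ (0,1)`,
the total weight of polymers containing any given vertex is at most `θ` (which is `< 1`). -/
theorem stmt_2 {V : Type} [Fintype V] [DecidableEq V] (G : SimpleGraph V) (q : ℕ)
    (hq : 2 ≤ q) (g : V → Fin q) (C : Finset (Polymer G q g)) (w : Polymer G q g → ℝ)
    (hw : ∀ γ ∈ C, 0 ≤ w γ) (θ : ℝ) (hθ : θ ∈ Set.Ioo (0 : ℝ) 1)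
    (hmix : MixingCond C w θ) (v : V) :
    aWeight C w v ≤ θ := by
  set F := C.filter (fun γ => v ∈ γ.verts) with hF
  have hEq : aWeight C w v = ∑ γ ∈ F, w γ := by
    unfold aWeight
    refine Finset.sum_congr ?_ (fun _ _ => rfl)
    ext γ; simp [hF]
  rw [hEq]
  rcases F.eq_empty_or_nonempty with h | h
  · simp [h, le_of_lt hθ.1]
  · obtain ⟨γ₀, hγ₀F, hmin⟩ := F.exists_min_image (fun γ => γ.size) h
    have hγ₀C : γ₀ ∈ C := (mem_filter.mp hγ₀F).1
    have hm : 1 ≤ γ₀.size := Finset.card_pos.mpr γ₀.nonempty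
    have hwF : ∀ γ ∈ F, 0 ≤ w γ := fun γ hγ => hw γ (mem_filter.mp hγ).1
    -- F ⊆ incompat filter
    have hsub : F ⊆ C.filter (fun γ' => γ'.Incompat γ₀) := by
      intro γ hγ
      rw [mem_filter] at hγ ⊢
      exact ⟨hγ.1, ⟨v, hγ.2, v, (mem_filter.mp hγ₀F).2, Or.inl rfl⟩⟩
    have hT : ∑ γ ∈ F, (γ.size : ℝ) * w γ ≤ θ * γ₀.size := by
      refine le_trans (Finset.sum_le_sum_of_subset_of_nonneg hsub ?_) (hmix γ₀ hγ₀C)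
      intro γ hγ _
      exact mul_nonneg (Nat.cast_nonneg _) (hw γ (mem_filter.mp hγ).1)
    have hma : (γ₀.size : ℝ) * ∑ γ ∈ F, w γ ≤ ∑ γ ∈ F, (γ.size : ℝ) * w γ := by
      rw [Finset.mul_sum]
      refine Finset.sum_le_sum fun γ hγ => ?_
      exact mul_le_mul_of_nonneg_right (by exact_mod_cast hmin γ hγ) (hwF γ hγ)
    have hmpos : (0:ℝ) < γ₀.size := by exact_mod_cast hm
    nlinarith [hT, hma]
end

section
/- Let G have maximum degree Δ ≥ 3 and suppose a polymer model (C(G), w) with q spins satisfies the polymer sampling condition w_γ ≤ e^{−τ|γ|} for all γ ∈ C(G), with constant τ ≥ 5 + 3·log((q−1)Δ). Then the Kotecký–Preiss condition holds: for every γ ∈ C(G), Σ_{γ' ≁ γ} e^{|γ'|} w_{γ'} ≤ |γ|. -/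
open Finset

attribute [local instance] Classical.propDecidable

/-! A polymer `γ'` incompatible with `γ` contains a vertex of the closed neighbourhood of `γ`,
which has at most `|γ| (Δ + 1)` vertices. A connected set of `k` vertices is the support of a
closed walk of length `2 (k - 1)` starting at any of its vertices, so at most
`|γ| (Δ + 1) Δ^(2 (k - 1))` vertex sets are possible, each carrying at most `(q - 1)^k` spin
assignments: there are at most `|γ| ((q - 1) Δ)^(3 k)` such polymers of size `k`. Each contributes
at most `e^((1 - τ) k)` to the sum, and `((q - 1) Δ)^3 e^(1 - τ) ≤ e^(-1) < 1/2`, so the sum is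
at most `|γ| ∑_{k ≥ 1} 2^(-k) = |γ|`. -/

namespace SimpleGraph

theorem Connected.exists_closed_walk_length_forall_mem_support {W : Type*}
    [Fintype W] {H : SimpleGraph W} (hH : H.Connected) (u : W) :
    ∃ p : H.Walk u u, p.length = 2 * (Fintype.card W - 1) ∧ ∀ x, x ∈ p.support := by
  obtain ⟨n, hn⟩ : ∃ n, Fintype.card W = n + 1 :=
    ⟨_, (Nat.succ_pred_eq_of_pos (Fintype.card_pos_iff.2 ⟨u⟩)).symm⟩
  rw [hn, Nat.add_sub_cancel]
  induction n generalizing W with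
  | zero =>
    refine ⟨.nil, rfl, fun x => ?_⟩
    simp [Fintype.card_le_one_iff.1 hn.le x u]
  | succ n ih =>
    classical
    have : Nontrivial W := Fintype.one_lt_card_iff_nontrivial.1 (by omega)
    -- Cover the graph minus a non-separating vertex `v`, then splice in a detour to `v` and back.
    obtain ⟨v, hv⟩ := hH.exists_connected_induce_compl_singleton_of_finite_nontrivial
    obtain ⟨y, hvy⟩ := hH.preconnected.exists_adj_of_nontrivial v
    have hy : y ∈ ({v}ᶜ : Set W) := hvy.ne.symm
    obtain ⟨p, hp, hsupp⟩ := ih hv ⟨y, hy⟩ (by rw [Fintype.card_compl_set]; simp [hn])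
    let f := (Embedding.induce (G := H) {v}ᶜ).toHom
    have hvy : H.Adj v (f ⟨y, hy⟩) := hvy
    let c := (p.map f).append (.cons hvy.symm (.cons hvy .nil))
    have hc : ∀ x, x ∈ c.support := fun x => by
      rcases eq_or_ne x v with rfl | hx
      · simp [c]
      · simp only [c, Walk.mem_support_append_iff, Walk.support_map]
        exact .inl (List.mem_map_of_mem (hsupp ⟨x, hx⟩))
    exact ⟨c.rotate u (hc u), by simp [c, hp]; ring, fun x => by simpa using hc x⟩

theorem card_finsetWalkLength_le {V : Type*} (G : SimpleGraph V) [DecidableEq V]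
    [G.LocallyFinite] {Δ : ℕ} (hdeg : ∀ v, G.degree v ≤ Δ) (n : ℕ) (u v : V) :
    #(G.finsetWalkLength n u v) ≤ Δ ^ n := by
  induction n generalizing u with
  | zero =>
    unfold finsetWalkLength
    split
    · subst_vars; simp
    · simp
  | succ n ih =>
    calc #(G.finsetWalkLength (n + 1) u v)
        ≤ ∑ w : G.neighborSet u, #(G.finsetWalkLength n w v) := by
          rw [finsetWalkLength]
          exact card_biUnion_le.trans (sum_le_sum fun w _ => (card_map _).le)
      _ ≤ ∑ _w : G.neighborSet u, Δ ^ n := sum_le_sum fun w _ => ih w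
      _ ≤ Δ ^ (n + 1) := by
          rw [sum_const, card_univ, card_neighborSet_eq_degree, smul_eq_mul, pow_succ']
          exact Nat.mul_le_mul_right _ (hdeg u)

end SimpleGraph

namespace Polymer

variable {V : Type} {G : SimpleGraph V} {q : ℕ} {g : V → Fin q}

theorem spin_injective : Function.Injective (spin : Polymer G q g → V → Fin q) := by
  intro γ₁ γ₂ h
  have hverts : γ₁.verts = γ₂.verts := by
    ext v
    constructor <;> intro hv <;> by_contra hv'
    · exact γ₁.spin_ne v hv (h ▸ γ₂.spin_ground v hv')
    · exact γ₂.spin_ne v hv (h ▸ γ₁.spin_ground v hv')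
  cases γ₁; cases γ₂
  cases hverts; cases h
  rfl

theorem exists_closed_walk_support_toFinset_eq (γ : Polymer G q g) {u : V} (hu : u ∈ γ.verts) :
    ∃ p : G.Walk u u, p.length = 2 * (γ.size - 1) ∧ p.support.toFinset = γ.verts := by
  obtain ⟨p, hlen, hsupp⟩ :=
    γ.connected.exists_closed_walk_length_forall_mem_support ⟨u, hu⟩
  let p' := p.map (SimpleGraph.Embedding.induce (G := G) _).toHom
  have hlen' : p'.length = 2 * (γ.size - 1) :=
    (p.length_map _).trans (by simpa [size] using hlen)
  have hsupp' : p'.support.toFinset = γ.verts := by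
    ext x
    simp only [p', SimpleGraph.Walk.support_map, List.mem_toFinset, List.mem_map]
    exact ⟨fun ⟨y, _, hy⟩ => hy ▸ y.2, fun hx => ⟨⟨x, hx⟩, hsupp _, rfl⟩⟩
  exact ⟨p', hlen', hsupp'⟩

variable [Fintype V] {Δ : ℕ}

theorem card_filter_verts_eq_le (C : Finset (Polymer G q g)) (S : Finset V) :
    #{γ ∈ C | γ.verts = S} ≤ (q - 1) ^ #S := by
  let spins := Fintype.piFinset fun v => if v ∈ S then univ.erase (g v) else {g v}
  calc #{γ ∈ C | γ.verts = S}
      ≤ #spins := card_le_card_of_injOn spin (fun γ hγ => by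
          obtain ⟨-, rfl⟩ := mem_filter.1 hγ
          refine Fintype.mem_piFinset.2 fun v => ?_
          split_ifs with hv
          · exact mem_erase.2 ⟨γ.spin_ne v hv, mem_univ _⟩
          · exact mem_singleton.2 (γ.spin_ground v hv)) spin_injective.injOn
    _ = (q - 1) ^ #S := by
      simp [spins, Fintype.card_piFinset, apply_ite, card_erase_of_mem]

theorem card_filter_size_eq_succ_le_of_meets (hdeg : ∀ v, G.degree v ≤ Δ)
    (C : Finset (Polymer G q g)) (A : Finset V) (hA : ∀ γ ∈ C, ∃ a ∈ A, a ∈ γ.verts) (m : ℕ) :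
    #{γ ∈ C | γ.size = m + 1} ≤ (q - 1) ^ (m + 1) * (#A * Δ ^ (2 * m)) := by
  let vertexSets := A.biUnion fun a =>
    (G.finsetWalkLength (2 * m) a a).image fun p => p.support.toFinset
  have hmaps : ∀ γ ∈ C.filter (·.size = m + 1), γ.verts ∈ vertexSets := by
    intro γ hγ
    obtain ⟨hγC, hsize⟩ := mem_filter.1 hγ
    obtain ⟨a, ha, haγ⟩ := hA γ hγC
    obtain ⟨p, hlen, hsupp⟩ := γ.exists_closed_walk_support_toFinset_eq haγ
    refine mem_biUnion.2 ⟨a, ha, mem_image.2 ⟨p, ?_, hsupp⟩⟩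
    rw [SimpleGraph.mem_finsetWalkLength_iff, hlen, hsize, Nat.add_sub_cancel]
  have hfiber : ∀ S ∈ vertexSets,
      #{γ ∈ C.filter (·.size = m + 1) | γ.verts = S} ≤ (q - 1) ^ (m + 1) := by
    intro S _
    obtain ⟨γ, hγ⟩ | hempty :=
      ({γ ∈ C.filter (·.size = m + 1) | γ.verts = S}).eq_empty_or_nonempty.symm
    · obtain ⟨hγsize, rfl⟩ := mem_filter.1 hγ
      have hsize : #γ.verts = m + 1 := (mem_filter.1 hγsize).2
      exact hsize ▸ card_filter_verts_eq_le _ γ.verts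
    · simp [hempty]
  calc #{γ ∈ C | γ.size = m + 1}
      ≤ (q - 1) ^ (m + 1) * #vertexSets := card_le_mul_card_image_of_maps_to hmaps _ hfiber
    _ ≤ (q - 1) ^ (m + 1) * (#A * Δ ^ (2 * m)) := by
      refine Nat.mul_le_mul_left _ (card_biUnion_le.trans ?_)
      calc ∑ a ∈ A, #((G.finsetWalkLength (2 * m) a a).image fun p => p.support.toFinset)
          ≤ ∑ _a ∈ A, Δ ^ (2 * m) :=
            sum_le_sum fun a _ => card_image_le.trans (G.card_finsetWalkLength_le hdeg _ a a)
        _ = #A * Δ ^ (2 * m) := by rw [sum_const, smul_eq_mul]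

theorem card_filter_size_eq_succ_le_of_incompat (hq : 2 ≤ q) (hΔ : 2 ≤ Δ)
    (hdeg : ∀ v, G.degree v ≤ Δ) (γ : Polymer G q g) (C : Finset (Polymer G q g))
    (hC : ∀ γ' ∈ C, γ'.Incompat γ) (m : ℕ) :
    #{γ' ∈ C | γ'.size = m + 1} ≤ γ.size * ((q - 1) * Δ) ^ (3 * (m + 1)) := by
  let nbhd := γ.verts.biUnion fun u => insert u (G.neighborFinset u)
  have hmeet : ∀ γ' ∈ C, ∃ a ∈ nbhd, a ∈ γ'.verts := by
    intro γ' hγ'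
    obtain ⟨a, ha, u, hu, rfl | hadj⟩ := hC γ' hγ'
    · exact ⟨a, mem_biUnion.2 ⟨a, hu, mem_insert_self _ _⟩, ha⟩
    · exact ⟨a, mem_biUnion.2 ⟨u, hu, mem_insert_of_mem (by simpa using hadj.symm)⟩, ha⟩
  have hnbhd : #nbhd ≤ γ.size * (Δ + 1) := by
    refine card_biUnion_le.trans ((sum_le_sum fun u _ => ?_).trans (sum_const _).le)
    exact (card_insert_le _ _).trans (by simpa using hdeg u)
  have hq1 : 1 ≤ q - 1 := by omega
  have hΔ3 : Δ + 1 ≤ Δ ^ 3 := by nlinarith [pow_succ Δ 2, pow_two Δ]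
  calc #{γ' ∈ C | γ'.size = m + 1}
      ≤ (q - 1) ^ (m + 1) * (#nbhd * Δ ^ (2 * m)) :=
        card_filter_size_eq_succ_le_of_meets hdeg C nbhd hmeet m
    _ ≤ (q - 1) ^ (3 * (m + 1)) * (γ.size * Δ ^ 3 * Δ ^ (2 * m)) :=
        Nat.mul_le_mul (Nat.pow_le_pow_right hq1 (by omega))
          (Nat.mul_le_mul_right _ (hnbhd.trans (Nat.mul_le_mul_left _ hΔ3)))
    _ ≤ (q - 1) ^ (3 * (m + 1)) * (γ.size * Δ ^ (3 * (m + 1))) := by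
        rw [mul_assoc γ.size, ← pow_add]
        exact Nat.mul_le_mul_left _
          (Nat.mul_le_mul_left _ (Nat.pow_le_pow_right (by omega) (by omega)))
    _ = γ.size * ((q - 1) * Δ) ^ (3 * (m + 1)) := by ring

end Polymer

theorem Finset.sum_pow_le_of_card_fiber_le {ι : Type*} (s : Finset ι) (size : ι → ℕ)
    (hsize : ∀ i ∈ s, size i ≠ 0) {x c : ℝ} (hc : 0 ≤ c)
    (hcard : ∀ m : ℕ, #{i ∈ s | size i = m + 1} * x ^ (m + 1) ≤ c * (1 / 2) ^ (m + 1)) :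
    ∑ i ∈ s, x ^ size i ≤ c := by
  let T := s.image size
  have hT : 0 ∉ T := by simpa [T] using fun i hi h => hsize i hi h
  have hgeom : ∑ k ∈ T, (1 / 2 : ℝ) ^ k ≤ 1 := by
    have := (summable_geometric_two.sum_le_tsum (insert 0 T) fun k _ => by positivity).trans
      tsum_geometric_two.le
    rw [sum_insert hT] at this
    linarith
  calc ∑ i ∈ s, x ^ size i = ∑ k ∈ T, #{i ∈ s | size i = k} * x ^ k := by
        rw [sum_comp (fun k => x ^ k) size]; simp [T]
    _ ≤ ∑ k ∈ T, c * (1 / 2) ^ k := by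
        refine sum_le_sum fun k hk => ?_
        obtain ⟨m, rfl⟩ := Nat.exists_eq_succ_of_ne_zero (ne_of_mem_of_not_mem hk hT)
        exact hcard m
    _ ≤ c := by rw [← mul_sum]; exact mul_le_of_le_one_right hc hgeom

theorem Real.pow_three_mul_exp_one_sub_le_half {B τ : ℝ} (hB : 0 < B)
    (hτ : 2 + 3 * Real.log B ≤ τ) : B ^ 3 * Real.exp (1 - τ) ≤ 1 / 2 := by
  calc B ^ 3 * Real.exp (1 - τ) = Real.exp (3 * Real.log B + 1 - τ) := by
        rw [add_sub_assoc, Real.exp_add, ← Real.rpow_natCast, Real.rpow_def_of_pos hB]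
        push_cast; ring_nf
    _ ≤ Real.exp (-1) := Real.exp_le_exp.2 (by linarith)
    _ ≤ 1 / 2 := Real.exp_neg_one_lt_half.le

theorem stmt_3_general {V : Type} [Fintype V] (G : SimpleGraph V) (q Δ : ℕ)
    (hq : 2 ≤ q) (hΔ : 3 ≤ Δ) (hdeg : ∀ v : V, G.degree v ≤ Δ)
    (g : V → Fin q) (C : Finset (Polymer G q g)) (w : Polymer G q g → ℝ)
    (τ : ℝ)
    (hτ : 5 + 3 * Real.log (((q : ℝ) - 1) * Δ) ≤ τ)
    (hsamp : ∀ γ ∈ C, w γ ≤ Real.exp (-τ * γ.size)) :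
    ∀ γ ∈ C, ∑ γ' ∈ C.filter (fun γ' => γ'.Incompat γ),
        Real.exp (γ'.size) * w γ' ≤ (γ.size : ℝ) := by
  intro γ _
  have hcount := Polymer.card_filter_size_eq_succ_le_of_incompat hq (by omega) hdeg γ
    (C.filter (·.Incompat γ)) fun γ' hγ' => (mem_filter.1 hγ').2
  have hcast : (((q - 1) * Δ : ℕ) : ℝ) = ((q : ℝ) - 1) * Δ := by
    push_cast [Nat.cast_sub (by omega : 1 ≤ q)]; ring
  have hB : 0 < ((q : ℝ) - 1) * Δ := by
    rw [← hcast]; exact_mod_cast Nat.mul_pos (by omega) (by omega)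
  have hsmall := Real.pow_three_mul_exp_one_sub_le_half hB (by linarith)
  calc ∑ γ' ∈ C.filter (·.Incompat γ), Real.exp γ'.size * w γ'
      ≤ ∑ γ' ∈ C.filter (·.Incompat γ), Real.exp (1 - τ) ^ γ'.size := by
        refine sum_le_sum fun γ' hγ' => ?_
        calc Real.exp γ'.size * w γ' ≤ Real.exp γ'.size * Real.exp (-τ * γ'.size) :=
              mul_le_mul_of_nonneg_left (hsamp γ' (mem_filter.1 hγ').1) (Real.exp_nonneg _)
          _ = Real.exp (1 - τ) ^ γ'.size := by rw [← Real.exp_add, ← Real.exp_nat_mul]; ring_nf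
    _ ≤ γ.size := by
        refine sum_pow_le_of_card_fiber_le _ _ (fun γ' _ => γ'.nonempty.card_ne_zero)
          (Nat.cast_nonneg _) fun m => ?_
        calc _ ≤ ((γ.size * ((q - 1) * Δ) ^ (3 * (m + 1)) : ℕ) : ℝ) * Real.exp (1 - τ) ^ (m + 1) :=
              by gcongr; exact hcount m
          _ = γ.size * ((((q : ℝ) - 1) * Δ) ^ 3 * Real.exp (1 - τ)) ^ (m + 1) := by
              rw [Nat.cast_mul, Nat.cast_pow, hcast, pow_mul, mul_assoc, ← mul_pow]
          _ ≤ γ.size * (1 / 2) ^ (m + 1) := by gcongr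

/-- the polymer sampling condition with constant
`τ ≥ 5 + 3 log((q-1)Δ)` implies the Kotecký–Preiss condition
`∑_{γ' ≁ γ} e^{|γ'|} w_{γ'} ≤ |γ|`. -/
theorem stmt_3 {V : Type} [Fintype V] [DecidableEq V] (G : SimpleGraph V) (q Δ : ℕ)
    (hq : 2 ≤ q) (hΔ : 3 ≤ Δ) (hdeg : ∀ v : V, G.degree v ≤ Δ)
    (g : V → Fin q) (C : Finset (Polymer G q g)) (w : Polymer G q g → ℝ)
    (hw : ∀ γ ∈ C, 0 ≤ w γ) (τ : ℝ)
    (hτ : 5 + 3 * Real.log (((q : ℝ) - 1) * Δ) ≤ τ)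
    (hsamp : ∀ γ ∈ C, w γ ≤ Real.exp (-τ * γ.size)) :
    ∀ γ ∈ C, ∑ γ' ∈ C.filter (fun γ' => γ'.Incompat γ),
        Real.exp (γ'.size) * w γ' ≤ (γ.size : ℝ) :=
  stmt_3_general G q Δ hq hΔ hdeg g C w τ hτ hsamp
end

section
/- Let (C(G), w) be a polymer model on an n-vertex graph G and for ρ ≥ 0 let Z(ρ) = Σ_{Γ∈Ω} Π_{γ∈Γ} w_γ e^{−ρ|γ|}. Then for every ρ ≥ 0, Z(0)·Z(ρ + 1/n) ≤ e · Z(1/n)·Z(ρ). Equivalently, for the annealing estimator W = Π over the cooling schedule ρ_i = i/n, the relative second moment satisfies E[W²]/(E[W])² = (Z(0)/Z(1/n))·(Z(ρ_{ℓ+1})/Z(ρ_ℓ)) ≤ e, so Var(W)/(E[W])² ≤ e − 1. -/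
open Finset

attribute [local instance] Classical.propDecidable

section PolymerModel

variable {V : Type} [Fintype V] [DecidableEq V] {G : SimpleGraph V} {q : ℕ} {g : V → Fin q}

/-- The state space `Ω`: sets of pairwise compatible allowed polymers. -/
noncomputable def polymerOmega (C : Finset (Polymer G q g)) :
    Finset (Finset (Polymer G q g)) :=
  C.powerset.filter fun Γ => ∀ γ ∈ Γ, ∀ γ' ∈ Γ, γ ≠ γ' → ¬ γ.Incompat γ'

/-- The deformed partition function `Z(ρ) = ∑_{Γ∈Ω} ∏_{γ∈Γ} w_γ e^{-ρ|γ|}`. -/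
noncomputable def polymerZrho (C : Finset (Polymer G q g)) (w : Polymer G q g → ℝ)
    (ρ : ℝ) : ℝ :=
  ∑ Γ ∈ polymerOmega C, ∏ γ ∈ Γ, (w γ * Real.exp (-ρ * γ.size))

/-- The deformed Gibbs measure `μ_ρ`. -/
noncomputable def polymerMurho (C : Finset (Polymer G q g)) (w : Polymer G q g → ℝ)
    (ρ : ℝ) (Γ : Finset (Polymer G q g)) : ℝ :=
  (∏ γ ∈ Γ, (w γ * Real.exp (-ρ * γ.size))) / polymerZrho C w ρ

end PolymerModel

lemma polymer_sum_size_le {V : Type} [Fintype V] [DecidableEq V] {G : SimpleGraph V}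
    {q : ℕ} {g : V → Fin q} {C Γ : Finset (Polymer G q g)} (h : Γ ∈ polymerOmega C) :
    ∑ γ ∈ Γ, γ.size ≤ Fintype.card V := by
  have h' : Γ ⊆ C ∧ ∀ γ ∈ Γ, ∀ γ' ∈ Γ, γ ≠ γ' → ¬ γ.Incompat γ' := by
    simpa [polymerOmega, Finset.mem_filter, Finset.mem_powerset] using h
  have hdisj : ∀ γ ∈ Γ, ∀ γ' ∈ Γ, γ ≠ γ' → Disjoint γ.verts γ'.verts := by
    intro γ hγ γ' hγ' hne
    rw [Finset.disjoint_left]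
    intro v hv hv'
    exact h'.2 γ hγ γ' hγ' hne ⟨v, hv, v, hv', Or.inl rfl⟩
  calc ∑ γ ∈ Γ, γ.size = (Γ.biUnion fun γ => γ.verts).card :=
        (Finset.card_biUnion hdisj).symm
    _ ≤ Fintype.card V := Finset.card_le_univ _

lemma polymerZrho_nonneg {V : Type} [Fintype V] [DecidableEq V] {G : SimpleGraph V}
    {q : ℕ} {g : V → Fin q} (C : Finset (Polymer G q g)) (w : Polymer G q g → ℝ)
    (hw : ∀ γ ∈ C, 0 ≤ w γ) (r : ℝ) : 0 ≤ polymerZrho C w r := by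
  apply Finset.sum_nonneg
  intro Γ hΓ
  have hsub : Γ ⊆ C := by
    have := (Finset.mem_filter.mp hΓ).1
    exact Finset.mem_powerset.mp this
  exact Finset.prod_nonneg fun γ hγ =>
    mul_nonneg (hw γ (hsub hγ)) (Real.exp_nonneg _)

/-- for every `ρ ≥ 0`, `Z(0)·Z(ρ+1/n) ≤ e·Z(1/n)·Z(ρ)`; this is exactly the
bound `E[W²]/(E[W])² = (Z(0)/Z(1/n))·(Z(ρ+1/n)/Z(ρ)) ≤ e` on the relative second moment
of the annealing estimator, i.e. `Var(W)/(E[W])² ≤ e - 1`. -/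
theorem stmt_9 {V : Type} [Fintype V] [DecidableEq V] (G : SimpleGraph V) (q : ℕ)
    (hq : 2 ≤ q) (g : V → Fin q) (C : Finset (Polymer G q g)) (w : Polymer G q g → ℝ)
    (hw : ∀ γ ∈ C, 0 ≤ w γ) (ρ : ℝ) (hρ : 0 ≤ ρ) :
    polymerZrho C w 0 * polymerZrho C w (ρ + 1 / (Fintype.card V : ℝ))
      ≤ Real.exp 1 * (polymerZrho C w (1 / (Fintype.card V : ℝ)) * polymerZrho C w ρ) := by
  set t : ℝ := 1 / (Fintype.card V : ℝ) with ht_def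
  have ht : 0 ≤ t := by positivity
  have hsub : ∀ Γ ∈ polymerOmega C, Γ ⊆ C := fun Γ hΓ =>
    Finset.mem_powerset.mp (Finset.mem_filter.mp hΓ).1
  -- termwise weight nonnegativity
  have hwnn : ∀ Γ ∈ polymerOmega C, ∀ γ ∈ Γ, 0 ≤ w γ :=
    fun Γ hΓ γ hγ => hw γ (hsub Γ hΓ hγ)
  -- Step 1 : Z(ρ+t) ≤ Z(ρ)
  have h1 : polymerZrho C w (ρ + t) ≤ polymerZrho C w ρ := by
    apply Finset.sum_le_sum
    intro Γ hΓ
    apply Finset.prod_le_prod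
    · intro γ hγ
      exact mul_nonneg (hwnn Γ hΓ γ hγ) (Real.exp_nonneg _)
    · intro γ hγ
      apply mul_le_mul_of_nonneg_left _ (hwnn Γ hΓ γ hγ)
      apply Real.exp_le_exp.mpr
      have : (0:ℝ) ≤ (γ.size : ℝ) := Nat.cast_nonneg _
      nlinarith
  -- Step 2 : Z(0) ≤ e · Z(t)
  have h2 : polymerZrho C w 0 ≤ Real.exp 1 * polymerZrho C w t := by
    rw [polymerZrho, polymerZrho, Finset.mul_sum]
    apply Finset.sum_le_sum
    intro Γ hΓ
    have hsplit : ∀ r : ℝ, ∏ γ ∈ Γ, (w γ * Real.exp (-r * γ.size))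
        = (∏ γ ∈ Γ, w γ) * Real.exp (-r * ∑ γ ∈ Γ, (γ.size : ℝ)) := by
      intro r
      rw [Finset.prod_mul_distrib, Finset.mul_sum, ← Real.exp_sum]
    rw [hsplit, hsplit]
    have hpw : 0 ≤ ∏ γ ∈ Γ, w γ := Finset.prod_nonneg (hwnn Γ hΓ)
    have hts : t * (∑ γ ∈ Γ, (γ.size : ℝ)) ≤ 1 := by
      have hsum : (∑ γ ∈ Γ, (γ.size : ℝ)) ≤ (Fintype.card V : ℝ) := by
        have := polymer_sum_size_le hΓ
        push_cast
        exact_mod_cast this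
      rcases eq_or_ne (Fintype.card V : ℝ) 0 with hc | hc
      · have hs0 : (∑ γ ∈ Γ, (γ.size : ℝ)) = 0 := by
          have hnn : 0 ≤ ∑ γ ∈ Γ, (γ.size : ℝ) :=
            Finset.sum_nonneg fun _ _ => Nat.cast_nonneg _
          linarith [hsum, hc ▸ hsum]
        rw [hs0]; norm_num
      · have hcpos : (0:ℝ) < (Fintype.card V : ℝ) :=
          lt_of_le_of_ne (Nat.cast_nonneg _) (Ne.symm hc)
        rw [ht_def]
        rw [div_mul_eq_mul_div, one_mul, div_le_one hcpos]
        exact hsum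
    calc (∏ γ ∈ Γ, w γ) * Real.exp (-0 * ∑ γ ∈ Γ, (γ.size : ℝ))
        = ∏ γ ∈ Γ, w γ := by norm_num
      _ ≤ (∏ γ ∈ Γ, w γ) * (Real.exp 1 * Real.exp (-t * ∑ γ ∈ Γ, (γ.size : ℝ))) := by
          nth_rewrite 1 [← mul_one (∏ γ ∈ Γ, w γ)]
          apply mul_le_mul_of_nonneg_left _ hpw
          rw [← Real.exp_add]
          apply Real.one_le_exp
          linarith
      _ = Real.exp 1 * ((∏ γ ∈ Γ, w γ) * Real.exp (-t * ∑ γ ∈ Γ, (γ.size : ℝ))) := by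
          ring
  have hZ1 : 0 ≤ polymerZrho C w (ρ + t) := polymerZrho_nonneg C w hw _
  have hZ2 : 0 ≤ Real.exp 1 * polymerZrho C w t :=
    mul_nonneg (Real.exp_nonneg _) (polymerZrho_nonneg C w hw _)
  calc polymerZrho C w 0 * polymerZrho C w (ρ + t)
      ≤ (Real.exp 1 * polymerZrho C w t) * polymerZrho C w ρ :=
        mul_le_mul h2 h1 hZ1 hZ2
    _ = Real.exp 1 * (polymerZrho C w t * polymerZrho C w ρ) := by ring
end

section
/- Let q ≥ 2, Δ ≥ 3 be integers, α > 0 a real, and β ≥ (5 + 3·log((q−1)Δ))/α. Let G be an n-vertex α-expander graph of maximum degree at most Δ and g ∈ {0,…,q−1} a ground-state color. Then every Potts polymer γ (a connected vertex subset of G of size at most n/2 with each vertex assigned a color from {0,…,q−1}\{g}) satisfies w^g_γ = e^{−β·B(γ)} ≤ e^{−αβ|γ|}, i.e. the Potts polymer model satisfies the polymer sampling condition with constant τ = αβ. -/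
open Finset

attribute [local instance] Classical.propDecidable

section PottsDefs

variable {V : Type} [Fintype V] [DecidableEq V]

/-- The number of edges of `G` leaving the vertex set `S` (each such edge is counted once,
as an ordered pair with first coordinate in `S` and second coordinate outside `S`). -/
noncomputable def cutCount (G : SimpleGraph V) (S : Finset V) : ℕ :=
  ((univ : Finset (V × V)).filter fun p => p.1 ∈ S ∧ p.2 ∉ S ∧ G.Adj p.1 p.2).card

/-- An `α`-expander: every set `S` of at most half the vertices has `e(S,Sᶜ) ≥ α|S|`. -/
def IsExpander (G : SimpleGraph V) (α : ℝ) : Prop :=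
  ∀ S : Finset V, 2 * S.card ≤ Fintype.card V → α * (S.card : ℝ) ≤ (cutCount G S : ℝ)

/-- The number of bichromatic edges of `G` internal to `S` under the coloring `col`
(ordered pairs divided by two). -/
noncomputable def bichromInside (G : SimpleGraph V) (S : Finset V) {q : ℕ}
    (col : V → Fin q) : ℝ :=
  (((univ : Finset (V × V)).filter fun p =>
      p.1 ∈ S ∧ p.2 ∈ S ∧ G.Adj p.1 p.2 ∧ col p.1 ≠ col p.2).card : ℝ) / 2

/-- `B(γ)`: the number of bichromatic edges internal to the polymer plus the size of its
edge boundary. -/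
noncomputable def pottsB (G : SimpleGraph V) (S : Finset V) {q : ℕ} (col : V → Fin q) : ℝ :=
  bichromInside G S col + (cutCount G S : ℝ)

/-- `m(G,σ)`: the number of bichromatic edges of `G` under the coloring `σ`. -/
noncomputable def pottsEnergy (G : SimpleGraph V) {q : ℕ} (σ : V → Fin q) : ℝ :=
  (((univ : Finset (V × V)).filter fun p => G.Adj p.1 p.2 ∧ σ p.1 ≠ σ p.2).card : ℝ) / 2

/-- The partition function of the `q`-color ferromagnetic Potts model at inverse
temperature `β`. -/
noncomputable def pottsZ (G : SimpleGraph V) (q : ℕ) (β : ℝ) : ℝ :=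
  ∑ σ : V → Fin q, Real.exp (-β * pottsEnergy G σ)

end PottsDefs

/-- on an `α`-expander of maximum degree at most `Δ`, for
`β ≥ (5 + 3 log((q-1)Δ))/α`, every Potts polymer `γ` (a nonempty connected vertex subset of
size at most `n/2` whose vertices are assigned colors different from the ground color `g`)
has weight `w^g_γ = e^{-β B(γ)} ≤ e^{-αβ|γ|}`: the Potts polymer model satisfies the polymer
sampling condition with constant `τ = αβ`. -/
theorem stmt_10 {V : Type} [Fintype V] [DecidableEq V] (G : SimpleGraph V) (q Δ : ℕ)
    (hq : 2 ≤ q) (hΔ : 3 ≤ Δ) (hdeg : ∀ v : V, G.degree v ≤ Δ)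
    (α β : ℝ) (hα : 0 < α)
    (hβ : (5 + 3 * Real.log (((q : ℝ) - 1) * Δ)) / α ≤ β)
    (hexp : IsExpander G α) (g : Fin q)
    (S : Finset V) (hne : S.Nonempty) (hconn : (G.induce (↑S : Set V)).Connected)
    (hsmall : 2 * S.card ≤ Fintype.card V)
    (col : V → Fin q) (hcol : ∀ v ∈ S, col v ≠ g) :
    Real.exp (-β * pottsB G S col) ≤ Real.exp (-(α * β) * (S.card : ℝ)) := by
  have hlog : 0 ≤ Real.log (((q : ℝ) - 1) * Δ) := by
    apply Real.log_nonneg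
    have hq' : (2 : ℝ) ≤ (q : ℝ) := by exact_mod_cast hq
    have hΔ' : (3 : ℝ) ≤ (Δ : ℝ) := by exact_mod_cast hΔ
    nlinarith
  have hβ0 : 0 ≤ β := le_trans (by positivity) hβ
  have hcut : α * (S.card : ℝ) ≤ (cutCount G S : ℝ) := hexp S hsmall
  have hbi : 0 ≤ bichromInside G S col := by unfold bichromInside; positivity
  have hB : α * (S.card : ℝ) ≤ pottsB G S col := by
    unfold pottsB; linarith
  apply Real.exp_le_exp.mpr
  nlinarith
end

section
/- Let G be a finite simple graph of maximum degree at most Δ ≥ 3 and let v be a vertex of G. Then for every k ≥ 1, the number of vertex subsets of G of size k that contain v and induce a connected subgraph of G is at most (eΔ)^{k−1}. -/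
/-!
Run a breadth-first search of `G.induce S` from `v` that processes one queued vertex per step.
If `S` is connected and `#S = k`, the queue after `k - 1` steps is exactly `S`. Record step `i`
by the pairs `(i, j)`, where `j` is the index of a newly discovered vertex among the at most `Δ`
neighbours of the processed vertex. The search, and hence `S`, can be replayed from this record,
which is a `(k - 1)`-subset of `range (k - 1) ×ˢ range Δ`. So there are at most
`((k - 1) * Δ).choose (k - 1) ≤ (e Δ) ^ (k - 1)` such sets, using `n.choose m ≤ (e n / m) ^ m`.
-/

open Finset

attribute [local instance] Classical.propDecidable

namespace SimpleGraph

lemma subset_of_forall_adj_mem {V : Type*} {G : SimpleGraph V} {S T : Set V}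
    (hS : (G.induce S).Connected) {u : V} (huS : u ∈ S) (huT : u ∈ T)
    (hT : ∀ x ∈ T, ∀ y ∈ S, G.Adj x y → y ∈ T) : S ⊆ T := by
  intro w hwS
  by_contra hwT
  obtain ⟨p⟩ := hS.preconnected ⟨u, huS⟩ ⟨w, hwS⟩
  obtain ⟨d, -, hd, hd'⟩ := p.exists_boundary_dart {x | x.1 ∈ T} huT hwT
  exact hd' (hT _ hd _ d.snd.2 d.adj)

variable {V : Type*} [DecidableEq V] (G : SimpleGraph V) [G.LocallyFinite]

noncomputable def port (u w : V) : ℕ := (G.neighborFinset u).toList.idxOf w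

lemma port_lt_degree {u w : V} (h : G.Adj u w) : G.port u w < G.degree u := by
  rw [← card_neighborFinset_eq_degree, ← Finset.length_toList]
  exact List.idxOf_lt_length_iff.mpr (by simpa using h)

lemma port_injOn (u : V) : Set.InjOn (G.port u) (G.neighborSet u) := fun w hw _ _ h =>
  (List.idxOf_inj (by simpa using hw)).mp h

/-- Breadth-first search of `G.induce S` from `v`: step `n` processes the `n`-th vertex of the
queue and appends its neighbours in `S` that are not queued yet. Past the end of the queue
`getD` falls back to `v`, whose neighbours are already queued, so the queue no longer grows. -/
noncomputable def bfs (S : Finset V) (v : V) : ℕ → List V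
  | 0 => [v]
  | n + 1 => bfs S v n ++
      ((G.neighborFinset ((bfs S v n).getD n v) ∩ S) \ (bfs S v n).toFinset).toList

noncomputable def bfsVertex (S : Finset V) (v : V) (n : ℕ) : V := (G.bfs S v n).getD n v

noncomputable def bfsNew (S : Finset V) (v : V) (n : ℕ) : Finset V :=
  (G.neighborFinset (G.bfsVertex S v n) ∩ S) \ (G.bfs S v n).toFinset

noncomputable def bfsCode (S : Finset V) (v : V) (n : ℕ) : Finset (ℕ × ℕ) :=
  (range n).biUnion fun i => (G.bfsNew S v i).image fun w => (i, G.port (G.bfsVertex S v i) w)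

variable {G} {S : Finset V} {v : V}

lemma bfs_succ (n : ℕ) : G.bfs S v (n + 1) = G.bfs S v n ++ (G.bfsNew S v n).toList := rfl

lemma bfs_prefix {m n : ℕ} (h : m ≤ n) : G.bfs S v m <+: G.bfs S v n := by
  induction n, h using Nat.le_induction with
  | base => exact List.prefix_refl _
  | succ n _ ih => exact ih.trans (List.prefix_append _ _)

lemma start_mem_bfs (n : ℕ) : v ∈ G.bfs S v n :=
  (bfs_prefix n.zero_le).subset (List.mem_singleton_self v)

lemma bfs_nodup (n : ℕ) : (G.bfs S v n).Nodup := by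
  induction n with
  | zero => exact List.nodup_singleton v
  | succ n ih =>
    refine ih.append (Finset.nodup_toList _) fun x hx hx' => ?_
    simp only [Finset.mem_toList, mem_sdiff, List.mem_toFinset] at hx'
    exact hx'.2 hx

lemma bfs_subset (hv : v ∈ S) (n : ℕ) : (G.bfs S v n).toFinset ⊆ S := by
  induction n with
  | zero => simpa [bfs] using hv
  | succ n ih =>
    intro x hx
    simp only [bfs_succ, List.mem_toFinset, List.mem_append, Finset.mem_toList] at hx
    rcases hx with hx | hx
    · exact ih (List.mem_toFinset.mpr hx)
    · exact (mem_inter.mp (mem_sdiff.mp hx).1).2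

lemma length_bfs_le_card (hv : v ∈ S) (n : ℕ) : (G.bfs S v n).length ≤ #S := by
  rw [← List.toFinset_card_of_nodup (bfs_nodup n)]
  exact card_le_card (bfs_subset hv n)

lemma length_bfs (n : ℕ) : (G.bfs S v n).length = ∑ i ∈ range n, #(G.bfsNew S v i) + 1 := by
  induction n with
  | zero => rfl
  | succ n ih => rw [bfs_succ, List.length_append, ih, sum_range_succ, Finset.length_toList]; ring

lemma mem_bfs_succ_of_adj {i : ℕ} {y : V} (hy : y ∈ S) (hadj : G.Adj (G.bfsVertex S v i) y) :
    y ∈ G.bfs S v (i + 1) := by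
  by_cases hyi : y ∈ G.bfs S v i
  · exact (bfs_prefix i.le_succ).subset hyi
  · rw [bfs_succ, List.mem_append, Finset.mem_toList, bfsNew]
    simp [hy, hyi, hadj]

lemma lt_length_bfs (hv : v ∈ S) (hS : (G.induce (S : Set V)).Connected) {n : ℕ}
    (hn : n < #S) : n < (G.bfs S v n).length := by
  induction n using Nat.strong_induction_on with
  | _ n ih =>
  by_contra! hlen
  -- Every queued vertex has already been processed, so the queue is closed under adjacency.
  have hclosed : ∀ x ∈ (G.bfs S v n).toFinset, ∀ y ∈ S, G.Adj x y →
      y ∈ (G.bfs S v n).toFinset := by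
    intro x hx y hy hxy
    obtain ⟨i, hi, rfl⟩ := List.getElem_of_mem (List.mem_toFinset.mp hx)
    have hin : i < n := by omega
    have hii := ih i hin (by omega)
    have hvert : G.bfsVertex S v i = (G.bfs S v n)[i] := by
      rw [bfsVertex, List.getD_eq_getElem _ _ hii, (bfs_prefix hin.le).getElem hii]
    rw [List.mem_toFinset]
    exact (bfs_prefix hin).subset (mem_bfs_succ_of_adj hy (hvert ▸ hxy))
  have hcard := card_le_card (coe_subset.mp (subset_of_forall_adj_mem hS hv
    (List.mem_toFinset.mpr (start_mem_bfs n)) hclosed))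
  rw [List.toFinset_card_of_nodup (bfs_nodup n)] at hcard
  omega

lemma length_bfs_card_sub_one (hv : v ∈ S) (hS : (G.induce (S : Set V)).Connected) :
    (G.bfs S v (#S - 1)).length = #S := by
  have hpos := card_pos.mpr ⟨v, hv⟩
  have := lt_length_bfs hv hS (n := #S - 1) (by omega)
  exact le_antisymm (length_bfs_le_card hv _) (by omega)

lemma toFinset_bfs_card_sub_one (hv : v ∈ S) (hS : (G.induce (S : Set V)).Connected) :
    (G.bfs S v (#S - 1)).toFinset = S := by
  refine eq_of_subset_of_card_le (bfs_subset hv _) ?_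
  rw [List.toFinset_card_of_nodup (bfs_nodup _), length_bfs_card_sub_one hv hS]

lemma bfsNew_subset_neighborFinset (i : ℕ) :
    G.bfsNew S v i ⊆ G.neighborFinset (G.bfsVertex S v i) :=
  sdiff_subset.trans inter_subset_left

lemma mem_bfsCode {n i j : ℕ} :
    (i, j) ∈ G.bfsCode S v n ↔
      i < n ∧ ∃ w ∈ G.bfsNew S v i, G.port (G.bfsVertex S v i) w = j := by
  simp only [bfsCode, mem_biUnion, mem_range, mem_image, Prod.mk.injEq]
  constructor
  · rintro ⟨i, hi, w, hw, rfl, rfl⟩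
    exact ⟨hi, w, hw, rfl⟩
  · rintro ⟨hi, w, hw, rfl⟩
    exact ⟨i, hi, w, hw, rfl, rfl⟩

lemma bfsCode_subset {Δ : ℕ} (hdeg : ∀ u, G.degree u ≤ Δ) (n : ℕ) :
    G.bfsCode S v n ⊆ range n ×ˢ range Δ := by
  rintro ⟨i, j⟩ h
  obtain ⟨hi, w, hw, rfl⟩ := mem_bfsCode.mp h
  have hadj : G.Adj (G.bfsVertex S v i) w := by simpa using bfsNew_subset_neighborFinset i hw
  simpa [hi] using (G.port_lt_degree hadj).trans_le (hdeg _)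

lemma card_bfsCode (n : ℕ) : #(G.bfsCode S v n) = ∑ i ∈ range n, #(G.bfsNew S v i) := by
  rw [bfsCode, card_biUnion]
  · refine sum_congr rfl fun i _ => card_image_of_injOn fun w hw w' hw' h => ?_
    exact G.port_injOn _ (by simpa using bfsNew_subset_neighborFinset i hw)
      (by simpa using bfsNew_subset_neighborFinset i hw') (Prod.mk.inj h).2
  · intro i _ i' _ hii'
    refine Finset.disjoint_left.mpr ?_
    simp only [mem_image]
    rintro _ ⟨w, -, rfl⟩ ⟨w', -, h⟩
    exact hii' (Prod.mk.inj h).1.symm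

lemma card_bfsCode_card_sub_one (hv : v ∈ S) (hS : (G.induce (S : Set V)).Connected) :
    #(G.bfsCode S v (#S - 1)) = #S - 1 := by
  have := length_bfs_card_sub_one hv hS
  rw [length_bfs] at this
  rw [card_bfsCode]
  omega

lemma bfsNew_eq_filter {i n : ℕ} (hi : i < n) :
    G.bfsNew S v i = (G.neighborFinset (G.bfsVertex S v i)).filter
      fun w => (i, G.port (G.bfsVertex S v i) w) ∈ G.bfsCode S v n := by
  ext w
  simp only [mem_filter, mem_bfsCode]
  constructor
  · intro hw
    exact ⟨bfsNew_subset_neighborFinset i hw, hi, w, hw, rfl⟩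
  · rintro ⟨hw, -, w', hw', hport⟩
    rwa [← G.port_injOn _ (by simpa using bfsNew_subset_neighborFinset i hw')
      (by simpa using hw) hport]

lemma bfs_eq_of_bfsCode_eq {T : Finset V} {n : ℕ} (h : G.bfsCode S v n = G.bfsCode T v n) :
    ∀ m ≤ n, G.bfs S v m = G.bfs T v m := by
  intro m hm
  induction m with
  | zero => rfl
  | succ m ih =>
    have hbfs := ih (by omega)
    have hvert : G.bfsVertex S v m = G.bfsVertex T v m := by rw [bfsVertex, bfsVertex, hbfs]
    rw [bfs_succ, bfs_succ, bfsNew_eq_filter (S := S) hm, bfsNew_eq_filter (S := T) hm, h, hvert,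
      hbfs]

lemma eq_of_bfsCode_eq {T : Finset V} (hvS : v ∈ S) (hS : (G.induce (S : Set V)).Connected)
    (hvT : v ∈ T) (hT : (G.induce (T : Set V)).Connected) (hST : #S = #T)
    (h : G.bfsCode S v (#S - 1) = G.bfsCode T v (#S - 1)) : S = T := by
  rw [← toFinset_bfs_card_sub_one hvS hS, ← toFinset_bfs_card_sub_one hvT hT, ← hST,
    bfs_eq_of_bfsCode_eq h _ le_rfl]

theorem card_connected_le_choose [Fintype V] {Δ : ℕ} (hdeg : ∀ u, G.degree u ≤ Δ) (v : V)
    (k : ℕ) :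
    #{S : Finset V | v ∈ S ∧ #S = k ∧ (G.induce (S : Set V)).Connected}
      ≤ ((k - 1) * Δ).choose (k - 1) := by
  calc _ ≤ #((range (k - 1) ×ˢ range Δ).powersetCard (k - 1)) := by
        refine card_le_card_of_injOn (fun S => G.bfsCode S v (k - 1)) ?_ ?_
        · rintro S hS
          simp only [coe_filter, mem_univ, true_and, Set.mem_ofPred_eq] at hS
          obtain ⟨hv, rfl, hconn⟩ := hS
          rw [mem_coe, mem_powersetCard]
          exact ⟨bfsCode_subset hdeg _, card_bfsCode_card_sub_one hv hconn⟩
        · rintro S hS T hT h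
          simp only [coe_filter, mem_univ, true_and, Set.mem_ofPred_eq] at hS hT
          obtain ⟨hvS, rfl, hS⟩ := hS
          exact eq_of_bfsCode_eq hvS hS hT.1 hT.2.2 hT.2.1.symm h
    _ = ((k - 1) * Δ).choose (k - 1) := by simp

end SimpleGraph

theorem Nat.choose_le_exp_mul_div_pow (n k : ℕ) :
    (n.choose k : ℝ) ≤ (Real.exp 1 * n / k) ^ k := by
  rcases k.eq_zero_or_pos with rfl | hk
  · simp
  have hk' : (0 : ℝ) < k := by exact_mod_cast hk
  calc (n.choose k : ℝ) ≤ n ^ k / k.factorial := Nat.choose_le_pow_div k n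
    _ = (n / k) ^ k * (k ^ k / k.factorial) := by rw [div_pow]; field_simp
    _ ≤ (n / k) ^ k * Real.exp k := by gcongr; exact Real.pow_div_factorial_le_exp _ hk'.le k
    _ = (Real.exp 1 * n / k) ^ k := by rw [← Real.exp_one_pow]; ring

theorem stmt_19_general {V : Type} [Fintype V] [DecidableEq V] (G : SimpleGraph V) (Δ : ℕ)
    (hdeg : ∀ v : V, G.degree v ≤ Δ) (v : V) (k : ℕ) :
    (((univ : Finset (Finset V)).filter
        (fun S : Finset V => v ∈ S ∧ S.card = k ∧ (G.induce (↑S : Set V)).Connected)).card : ℝ)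
      ≤ (Real.exp 1 * (Δ : ℝ)) ^ (k - 1) := by
  calc _ ≤ (((k - 1) * Δ).choose (k - 1) : ℝ) := mod_cast G.card_connected_le_choose hdeg v k
    _ ≤ (Real.exp 1 * Δ) ^ (k - 1) := by
      rcases (k - 1).eq_zero_or_pos with hk | hk
      · simp [hk]
      convert Nat.choose_le_exp_mul_div_pow ((k - 1) * Δ) (k - 1) using 2
      push_cast
      field_simp

/-- Borgs–Chayes–Kahn–Lovász: in a graph of maximum degree at most `Δ ≥ 3`,
the number of vertex subsets of size `k` containing a fixed vertex `v` and inducing a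
connected subgraph is at most `(eΔ)^{k-1}`. -/
theorem stmt_19 {V : Type} [Fintype V] [DecidableEq V] (G : SimpleGraph V) (Δ : ℕ)
    (hΔ : 3 ≤ Δ) (hdeg : ∀ v : V, G.degree v ≤ Δ) (v : V) (k : ℕ) (hk : 1 ≤ k) :
    (((univ : Finset (Finset V)).filter
        (fun S : Finset V => v ∈ S ∧ S.card = k ∧ (G.induce (↑S : Set V)).Connected)).card : ℝ)
      ≤ (Real.exp 1 * (Δ : ℝ)) ^ (k - 1) :=
  stmt_19_general G Δ hdeg v k
end
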